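/- arXiv:2007.06067 — 3 statements merged into one kernel-verified Lean document; each statement's English description precedes it below -/
import Mathlib

section
/- Let R be a commutative ring, g ≥ 1 an integer, L ∈ R, and λ : ℕ → R a function with λ(b) = 0 for b > 2g satisfying the duality relation λ(g+δ) = λ(g-δ)·L^δ for all 0 ≤ δ ≤ g. Set J = ∑_{a=0}^{2g} λ(a) and for k ≥ 0 set c(k) = ∑_{(b,c): b+c ≤ k} λ(b)·L^c (sum over pairs of nonnegative integers). Then for every integer k with g ≤ k ≤ 2g-2, one has c(k) = J·(∑_{l=0}^{k-g} L^l) + c(2g-2-k)·L^{k-g+1}. -/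
private lemma Eadd {R : Type*} [CommRing R] (L : R) (m n : ℕ) :
    (∑ d ∈ Finset.range (m + n), L ^ d) =
      (∑ d ∈ Finset.range m, L ^ d) + L ^ m * ∑ d ∈ Finset.range n, L ^ d := by
  rw [Finset.sum_range_add, Finset.mul_sum]
  simp [pow_add]

private lemma keyA {R : Type*} [CommRing R] (L : R) (u w : ℕ) :
    (∑ d ∈ Finset.range (u + (w + u)), L ^ d) =
      (∑ d ∈ Finset.range u, L ^ d) + (∑ d ∈ Finset.range w, L ^ d) * L ^ u +
        L ^ (w + u) * (∑ d ∈ Finset.range u, L ^ d) := by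
  have h1 := Eadd L u (w + u)
  have h2 := Eadd L w u
  rw [h1, h2, pow_add]
  ring

private lemma keyB {R : Type*} [CommRing R] (L : R) (t v : ℕ) :
    (∑ d ∈ Finset.range ((t + v) + v), L ^ d) + L ^ v * (∑ d ∈ Finset.range t, L ^ d) =
      (∑ d ∈ Finset.range (t + v), L ^ d) + L ^ v * (∑ d ∈ Finset.range (t + v), L ^ d) := by
  have h1 := Eadd L (t + v) v
  have h2 := Eadd L t v
  rw [h1, h2, pow_add]
  ring

private lemma key {R : Type*} [CommRing R] (L : R) (g b k : ℕ) (hb : b < g)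
    (h1 : g ≤ k) (h2 : k ≤ 2 * g - 2) :
    (∑ d ∈ Finset.range (k + 1 - b), L ^ d) +
      L ^ (g - b) * (∑ d ∈ Finset.range (k + 1 - (2 * g - b)), L ^ d) =
    (∑ d ∈ Finset.range (k - g + 1), L ^ d) +
      (∑ d ∈ Finset.range (2 * g - 1 - k - b), L ^ d) * L ^ (k - g + 1) +
      L ^ (g - b) * (∑ d ∈ Finset.range (k - g + 1), L ^ d) := by
  rcases le_or_gt (b + k + 1) (2 * g) with hA | hB
  · have e1 : k + 1 - (2 * g - b) = 0 := by omega
    have hw : k + 1 - b = (k - g + 1) + ((2 * g - 1 - k - b) + (k - g + 1)) := by omega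
    have hv : g - b = (2 * g - 1 - k - b) + (k - g + 1) := by omega
    rw [e1, hw, hv]
    have := keyA L (k - g + 1) (2 * g - 1 - k - b)
    simp only [Finset.range_zero, Finset.sum_empty, mul_zero, add_zero]
    linear_combination this
  · have e1 : 2 * g - 1 - k - b = 0 := by omega
    have hw : k + 1 - b = ((k + 1 - (2 * g - b)) + (g - b)) + (g - b) := by omega
    have hu : k - g + 1 = (k + 1 - (2 * g - b)) + (g - b) := by omega
    rw [e1, hw, hu]
    have := keyB L (k + 1 - (2 * g - b)) (g - b)
    simp only [Finset.range_zero, Finset.sum_empty, zero_mul, add_zero]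
    linear_combination this

theorem stmt_1 {R : Type*} [CommRing R] (g : ℕ) (hg : 1 ≤ g) (L : R) (lam : ℕ → R)
    (hvan : ∀ b, 2 * g < b → lam b = 0)
    (hdual : ∀ δ, δ ≤ g → lam (g + δ) = lam (g - δ) * L ^ δ)
    (J : R) (hJ : J = ∑ a ∈ Finset.range (2 * g + 1), lam a)
    (c : ℕ → R)
    (hc : ∀ k, c k = ∑ b ∈ Finset.range (k + 1), ∑ d ∈ Finset.range (k + 1 - b), lam b * L ^ d)
    (k : ℕ) (hk1 : g ≤ k) (hk2 : k ≤ 2 * g - 2) :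
    c k = J * (∑ l ∈ Finset.range (k - g + 1), L ^ l) + c (2 * g - 2 - k) * L ^ (k - g + 1) := by
  rw [hc k, hc (2 * g - 2 - k), hJ]
  simp only [← Finset.mul_sum]
  set F : ℕ → R := fun b => lam b * ∑ d ∈ Finset.range (k + 1 - b), L ^ d with hF
  set H : ℕ → R := fun b =>
    lam b * (∑ l ∈ Finset.range (k - g + 1), L ^ l) +
      lam b * (∑ d ∈ Finset.range (2 * g - 2 - k + 1 - b), L ^ d) * L ^ (k - g + 1) with hH
  -- extend ranges to 2g+1
  have hL : (∑ b ∈ Finset.range (k + 1), F b) = ∑ b ∈ Finset.range (2 * g + 1), F b := by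
    apply Finset.sum_subset (Finset.range_subset_range.2 (by omega))
    intro b hb hnb
    simp only [Finset.mem_range] at hb hnb
    have : k + 1 - b = 0 := by omega
    simp [hF, this]
  have hL2 : (∑ a ∈ Finset.range (2 * g + 1), lam a) * (∑ l ∈ Finset.range (k - g + 1), L ^ l) +
        (∑ b ∈ Finset.range (2 * g - 2 - k + 1),
          lam b * ∑ d ∈ Finset.range (2 * g - 2 - k + 1 - b), L ^ d) * L ^ (k - g + 1) =
      ∑ b ∈ Finset.range (2 * g + 1), H b := by
    have hext : (∑ b ∈ Finset.range (2 * g - 2 - k + 1),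
          lam b * ∑ d ∈ Finset.range (2 * g - 2 - k + 1 - b), L ^ d) =
        ∑ b ∈ Finset.range (2 * g + 1),
          lam b * ∑ d ∈ Finset.range (2 * g - 2 - k + 1 - b), L ^ d := by
      apply Finset.sum_subset (Finset.range_subset_range.2 (by omega))
      intro b hb hnb
      simp only [Finset.mem_range] at hb hnb
      have : 2 * g - 2 - k + 1 - b = 0 := by omega
      simp [this]
    rw [hext, Finset.sum_mul, Finset.sum_mul, ← Finset.sum_add_distrib]
  rw [hL, hL2]
  clear hL hL2
  -- split both sums at g
  have h2g : 2 * g + 1 = (g + 1) + g := by omega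
  rw [h2g, Finset.sum_range_add F (g + 1) g, Finset.sum_range_add H (g + 1) g,
    ← Finset.sum_range_reflect (fun i => F (g + 1 + i)) g,
    ← Finset.sum_range_reflect (fun i => H (g + 1 + i)) g,
    Finset.sum_range_succ F g, Finset.sum_range_succ H g]
  have hgeq : F g = H g := by
    simp only [hF, hH]
    have e1 : k + 1 - g = k - g + 1 := by omega
    have e2 : 2 * g - 2 - k + 1 - g = 0 := by omega
    rw [e1, e2]
    simp
  have hsum : (∑ b ∈ Finset.range g, F b) + ∑ b ∈ Finset.range g, F (g + 1 + (g - 1 - b)) =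
      (∑ b ∈ Finset.range g, H b) + ∑ b ∈ Finset.range g, H (g + 1 + (g - 1 - b)) := by
    rw [← Finset.sum_add_distrib, ← Finset.sum_add_distrib]
    apply Finset.sum_congr rfl
    intro b hb
    simp only [Finset.mem_range] at hb
    have e5 : g + 1 + (g - 1 - b) = 2 * g - b := by omega
    rw [e5]
    have hd : lam (2 * g - b) = lam b * L ^ (g - b) := by
      rw [show 2 * g - b = g + (g - b) by omega, hdual _ (by omega),
        show g - (g - b) = b by omega]
    have e6 : 2 * g - 2 - k + 1 - (2 * g - b) = 0 := by omega
    have e8 : 2 * g - 2 - k + 1 - b = 2 * g - 1 - k - b := by omega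
    simp only [hF, hH, hd, e6, e8, Finset.range_zero, Finset.sum_empty, mul_zero, zero_mul,
      add_zero]
    linear_combination lam b * key L g b k hb hk1 hk2
  linear_combination hsum + hgeq
end

section
/- Let R be a commutative ring, g ≥ 1 an integer, L ∈ R, and λ : ℕ → R with λ(b) = 0 for b > 2g and λ(g+δ) = λ(g-δ)·L^δ for all 0 ≤ δ ≤ g. Set J = ∑_{a=0}^{2g} λ(a) and c(k) = ∑_{b+c ≤ k} λ(b)·L^c. Then for every k ≥ 2g-1, c(k) = J·(∑_{l=0}^{k-g} L^l). -/
private lemma geom_split {R : Type*} [CommRing R] (L : R) (a b : ℕ) :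
    ∑ i ∈ Finset.range (a + b), L ^ i
      = ∑ i ∈ Finset.range a, L ^ i + L ^ a * ∑ i ∈ Finset.range b, L ^ i := by
  rw [Finset.sum_range_add, Finset.mul_sum]
  simp [pow_add]

private lemma key_id {R : Type*} [CommRing R] (L : R) (m δ : ℕ) (h : δ ≤ m) :
    ∑ i ∈ Finset.range (m + δ), L ^ i + L ^ δ * ∑ i ∈ Finset.range (m - δ), L ^ i
      = ∑ i ∈ Finset.range m, L ^ i + L ^ δ * ∑ i ∈ Finset.range m, L ^ i := by
  obtain ⟨e, rfl⟩ : ∃ e, m = e + δ := ⟨m - δ, by omega⟩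
  rw [Nat.add_sub_cancel, geom_split L (e + δ) δ, geom_split L e δ]
  ring

theorem stmt_2 {R : Type*} [CommRing R] (g : ℕ) (hg : 1 ≤ g) (L : R) (lam : ℕ → R)
    (hvan : ∀ b, 2 * g < b → lam b = 0)
    (hdual : ∀ δ, δ ≤ g → lam (g + δ) = lam (g - δ) * L ^ δ)
    (J : R) (hJ : J = ∑ a ∈ Finset.range (2 * g + 1), lam a)
    (c : ℕ → R)
    (hc : ∀ k, c k = ∑ b ∈ Finset.range (k + 1), ∑ d ∈ Finset.range (k + 1 - b), lam b * L ^ d)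
    (k : ℕ) (hk : 2 * g - 1 ≤ k) :
    c k = J * (∑ l ∈ Finset.range (k - g + 1), L ^ l) := by
  have hgk : g ≤ k := by omega
  set S : R := ∑ l ∈ Finset.range (k - g + 1), L ^ l with hS
  set m : ℕ := k - g + 1 with hm
  have hmg : g ≤ m := by omega
  set F : ℕ → R := fun b => lam b * ∑ d ∈ Finset.range (k + 1 - b), L ^ d with hF
  set G : ℕ → R := fun b => lam b * S with hG
  set N : ℕ := k + 2 * g + 2 with hN
  have h1 : c k = ∑ b ∈ Finset.range N, F b := by
    rw [hc]
    refine Finset.sum_congr rfl (fun b _ => (Finset.mul_sum _ _ _).symm) |>.trans ?_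
    refine Finset.sum_subset (Finset.range_subset_range.2 (by omega)) (fun x _ hx => ?_)
    simp only [Finset.mem_range, not_lt] at hx
    have : k + 1 - x = 0 := by omega
    simp [hF, this]
  have h2 : ∑ b ∈ Finset.range N, F b = ∑ b ∈ Finset.range (2 * g + 1), F b := by
    refine (Finset.sum_subset (Finset.range_subset_range.2 (by omega)) (fun x _ hx => ?_)).symm
    simp only [Finset.mem_range, not_lt] at hx
    simp [hF, hvan x (by omega)]
  have dec : ∀ H : ℕ → R, ∑ b ∈ Finset.range (2 * g + 1), H b
      = (∑ δ ∈ Finset.range g, (H (g - (δ + 1)) + H (g + (δ + 1)))) + H g := by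
    intro H
    rw [show 2 * g + 1 = (g + 1) + g from by omega, Finset.sum_range_add]
    rw [← Finset.sum_range_reflect (fun j => H j) (g + 1)]
    rw [Finset.sum_range_succ' (fun j => H (g + 1 - 1 - j)) g]
    simp only [Finset.sum_add_distrib]
    have e1 : ∀ j, g + 1 - 1 - (j + 1) = g - (j + 1) := fun j => by omega
    have e2 : ∀ j, g + 1 + j = g + (j + 1) := fun j => by omega
    simp only [e1, e2, Nat.add_sub_cancel, Nat.sub_zero]
    ring
  have h3 : ∑ b ∈ Finset.range (2 * g + 1), F b = ∑ b ∈ Finset.range (2 * g + 1), G b := by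
    rw [dec F, dec G]
    have hg0 : F g = G g := by
      simp only [hF, hG]
      congr 1
      rw [show k + 1 - g = m from by omega]
    rw [hg0]
    congr 1
    refine Finset.sum_congr rfl (fun δ hδ => ?_)
    simp only [Finset.mem_range] at hδ
    have hδg : δ + 1 ≤ g := hδ
    simp only [hF, hG]
    rw [show k + 1 - (g - (δ + 1)) = m + (δ + 1) from by omega,
        show k + 1 - (g + (δ + 1)) = m - (δ + 1) from by omega,
        hdual (δ + 1) hδg]
    have hkey := key_id L m (δ + 1) (by omega)
    rw [← hS] at hkey
    linear_combination lam (g - (δ + 1)) * hkey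
  rw [h1, h2, h3, hJ, Finset.sum_mul]
end

section
/- Let R be a commutative ring, g ≥ 2 an integer, L ∈ R, and let λ : ℕ → R be a function with λ(a) = 0 for a > 2g and λ(g+δ) = λ(g-δ)·L^δ for all 0 ≤ δ ≤ g. Define c : ℕ → R by c(k) = ∑_{b+j≤k} λ(b)·L^j and set J = ∑_{a=0}^{2g} λ(a). Then, as polynomials in t, ∑_{k=g}^{2g-2} c(k) t^k = J·∑_{k=g}^{2g-2} (∑_{l=0}^{k-g} L^l) t^k + ∑_{k=g}^{2g-2} c(2g-2-k)·L^{k-g+1} t^k; equivalently, c(k) = J·∑_{l=0}^{k-g} L^l + c(2g-2-k)·L^{k-g+1} for g ≤ k ≤ 2g-2. -/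
theorem stmt_13 {R : Type*} [CommRing R] (g : ℕ) (hg : 2 ≤ g) (L : R) (lam : ℕ → R)
    (hvan : ∀ b, 2 * g < b → lam b = 0)
    (hdual : ∀ δ, δ ≤ g → lam (g + δ) = lam (g - δ) * L ^ δ)
    (J : R) (hJ : J = ∑ a ∈ Finset.range (2 * g + 1), lam a)
    (c : ℕ → R)
    (hc : ∀ k, c k = ∑ b ∈ Finset.range (k + 1), ∑ d ∈ Finset.range (k + 1 - b), lam b * L ^ d)
    (Z U M : R)
    (hZ : Z = (∑ k ∈ Finset.range (g - 1), c k * (L ^ k + L ^ (3 * g - 3 - 2 * k)))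
        + c (g - 1) * L ^ (g - 1) + U)
    (hM : M = Z - U) :
    M = (∑ k ∈ Finset.range (g - 1), c k * (L ^ k + L ^ (3 * g - 3 - 2 * k)))
        + c (g - 1) * L ^ (g - 1) ∧
    (∑ k ∈ Finset.Icc g (2 * g - 2), Polynomial.C (c k) * Polynomial.X ^ k : Polynomial R) =
      Polynomial.C J *
          (∑ k ∈ Finset.Icc g (2 * g - 2),
            Polynomial.C (∑ l ∈ Finset.range (k - g + 1), L ^ l) * Polynomial.X ^ k) +
        ∑ k ∈ Finset.Icc g (2 * g - 2),
          Polynomial.C (c (2 * g - 2 - k) * L ^ (k - g + 1)) * Polynomial.X ^ k := by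
  constructor
  · rw [hM, hZ]; ring
  · -- geometric sum fact
    have hgeom : ∀ n : ℕ, (1 - L) * ∑ l ∈ Finset.range n, L ^ l = 1 - L ^ n := by
      intro n
      have := geom_sum_mul L n
      linear_combination -this
    -- step lemma: c (k+1) = c k + ∑_{b ≤ k+1} lam b * L^(k+1-b)
    have hstep : ∀ k, c (k + 1) = c k + ∑ b ∈ Finset.range (k + 2), lam b * L ^ (k + 1 - b) := by
      intro k
      rw [hc (k + 1), hc k]
      have h1 : ∀ b ∈ Finset.range (k + 2),
          (∑ d ∈ Finset.range (k + 1 + 1 - b), lam b * L ^ d)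
            = (∑ d ∈ Finset.range (k + 1 - b), lam b * L ^ d) + lam b * L ^ (k + 1 - b) := by
        intro b hb
        have hb' : b ≤ k + 1 := by simpa [Nat.lt_succ_iff] using hb
        have e : k + 1 + 1 - b = (k + 1 - b) + 1 := by omega
        rw [e, Finset.sum_range_succ]
      rw [Finset.sum_congr rfl h1, Finset.sum_add_distrib,
        Finset.sum_range_succ (fun b => ∑ d ∈ Finset.range (k + 1 - b), lam b * L ^ d)]
      simp
    -- (i): (1-L) * c k + A = partial sum of lam
    have hi : ∀ k, (1 - L) * c k + ∑ b ∈ Finset.range (k + 2), lam b * L ^ (k + 1 - b)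
        = ∑ b ∈ Finset.range (k + 2), lam b := by
      intro k
      rw [hc k, Finset.mul_sum,
        Finset.sum_range_succ (fun b => lam b * L ^ (k + 1 - b)),
        Finset.sum_range_succ (fun b => lam b), ← add_assoc, ← Finset.sum_add_distrib]
      have h1 : ∀ b ∈ Finset.range (k + 1),
          (1 - L) * ∑ d ∈ Finset.range (k + 1 - b), lam b * L ^ d + lam b * L ^ (k + 1 - b)
            = lam b := by
        intro b hb
        have : (∑ d ∈ Finset.range (k + 1 - b), lam b * L ^ d)
            = lam b * ∑ d ∈ Finset.range (k + 1 - b), L ^ d := by rw [Finset.mul_sum]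
        rw [this]
        have := hgeom (k + 1 - b)
        linear_combination lam b * this
      rw [Finset.sum_congr rfl h1]
      simp
    -- key induction
    have key : ∀ N, N ≤ g - 1 → c (g - 1 + N)
        = (∑ l ∈ Finset.range N, L ^ l) * J + L ^ N * c (g - 1 - N) := by
      intro N
      induction N with
      | zero => intro _; simp
      | succ N ih =>
        intro hN1
        have ihv := ih (by omega)
        have e1 : g - 1 + (N + 1) = (g - 1 + N) + 1 := by omega
        have e2 : g - 1 - N = (g - 1 - (N + 1)) + 1 := by omega
        have hc2 : c (g - 1 - N) = c (g - 1 - (N + 1))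
            + ∑ b ∈ Finset.range (g - 1 - (N + 1) + 2), lam b * L ^ (g - 1 - (N + 1) + 1 - b) := by
          rw [e2]; exact hstep (g - 1 - (N + 1))
        -- (ii): duality part
        have hii : L ^ (N + 1)
            * ∑ b ∈ Finset.range (g - 1 - (N + 1) + 2), lam b * L ^ (g - 1 - (N + 1) + 1 - b)
            = ∑ a ∈ Finset.Icc (g + N + 1) (2 * g), lam a := by
          rw [Finset.mul_sum]
          have h1 : ∀ b ∈ Finset.range (g - 1 - (N + 1) + 2),
              L ^ (N + 1) * (lam b * L ^ (g - 1 - (N + 1) + 1 - b)) = lam (2 * g - b) := by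
            intro b hb
            have hb' : b < g - 1 - (N + 1) + 2 := Finset.mem_range.mp hb
            have hδ : g - b ≤ g := Nat.sub_le _ _
            have hd := hdual (g - b) hδ
            have u1 : g + (g - b) = 2 * g - b := by omega
            have u2 : g - (g - b) = b := by omega
            rw [u1, u2] at hd
            rw [hd, mul_comm (L ^ (N + 1)), mul_assoc, ← pow_add]
            congr 2
            omega
          rw [Finset.sum_congr rfl h1]
          apply Finset.sum_nbij' (i := fun b => 2 * g - b) (j := fun a => 2 * g - a) <;>
            intros a ha <;> simp only [Finset.mem_range, Finset.mem_Icc] at * <;> omega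
        -- (iii): splitting J
        have hiii : (∑ b ∈ Finset.range (g - 1 + N + 2), lam b)
            + ∑ a ∈ Finset.Icc (g + N + 1) (2 * g), lam a = J := by
          rw [hJ, Finset.range_eq_Ico]
          have hIcc : Finset.Icc (g + N + 1) (2 * g) = Finset.Ico (g + N + 1) (2 * g + 1) := by
            rw [Finset.Ico_add_one_right_eq_Icc]
          have e3 : g - 1 + N + 2 = g + N + 1 := by omega
          rw [hIcc, e3, Finset.range_eq_Ico]
          exact Finset.sum_Ico_consecutive lam (m := 0) (n := g + N + 1) (k := 2 * g + 1) (by omega) (by omega)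
        have h3 := hi (g - 1 + N)
        rw [ihv, hc2] at h3
        have h6 := hgeom N
        have hTsucc : (∑ l ∈ Finset.range (N + 1), L ^ l)
            = (∑ l ∈ Finset.range N, L ^ l) + L ^ N := Finset.sum_range_succ _ _
        rw [e1, hstep (g - 1 + N), ihv, hc2, hTsucc]
        linear_combination h3 + hii + hiii - J * h6
    rw [Finset.mul_sum, ← Finset.sum_add_distrib]
    refine Finset.sum_congr rfl ?_
    intro k hk
    obtain ⟨hk1, hk2⟩ := Finset.mem_Icc.mp hk
    have hck := key (k - g + 1) (by omega)
    have e1 : g - 1 + (k - g + 1) = k := by omega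
    have e2 : g - 1 - (k - g + 1) = 2 * g - 2 - k := by omega
    rw [e1, e2] at hck
    rw [hck]
    simp only [map_add, map_mul]
    ring
end
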